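/- arXiv:1706.08657 — 5 statements merged into one kernel-verified Lean document; each statement's English description precedes it below -/
import Mathlib

section
/- For every p ∈ (0,∞) and every family {a_Q} of non-negative reals indexed by dyadic cubes with only finitely many nonzero entries, pointwise one has (∑_Q a_Q 1_Q)^p ≍_p ∑_Q a_Q (∑_{R ⊆ Q} a_R 1_R)^{p-1}, i.e., there exist constants c(p), C(p) > 0 such that c(p) ∑_Q a_Q 1_Q(x) (∑_{R ⊆ Q} a_R 1_R(x))^{p-1} ≤ (∑_Q a_Q 1_Q(x))^p ≤ C(p) ∑_Q a_Q 1_Q(x) (∑_{R ⊆ Q} a_R 1_R(x))^{p-1} for all x. -/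
/-! At a point `x`, the cubes that contain `x` and carry mass form a finite chain, totally ordered
by their scale `k`. Listing it by increasing scale with partial sums `S_Q = ∑_{R.k ≤ Q.k} a_R`,
the total `T` telescopes as `T ^ p = ∑_Q (S_Q ^ p - (S_Q - a_Q) ^ p)`, and by Bernoulli's
inequality each increment lies between `min 1 p` and `max 1 p` times `a_Q * S_Q ^ (p - 1)`.
The sum over all `R ⊆ Q` lies between `S_Q` and `T` (it can exceed `S_Q`: in dimension `0` all
cubes are the same set), and since `∑_Q a_Q * T ^ (p - 1) = T ^ p`, moving the inner sums from
`S_Q` towards `T` keeps both bounds, in either monotonicity regime of `t ↦ t ^ (p - 1)`. -/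

open MeasureTheory ENNReal Filter

/-- A dyadic cube `2^k([0,1)^d + j)` in `ℝ^d`. -/
structure DyadicCube (d : ℕ) where
  k : ℤ
  j : Fin d → ℤ

/-- The underlying set of a dyadic cube. -/
def DyadicCube.toSet {d : ℕ} (Q : DyadicCube d) : Set (Fin d → ℝ) :=
  {x | ∀ i, (2:ℝ) ^ Q.k * (Q.j i) ≤ x i ∧ x i < (2:ℝ) ^ Q.k * (Q.j i + 1)}

namespace Real

variable {p u b : ℝ}

lemma mul_rpow_sub_one_of_nonneg {x : ℝ} (hx : 0 ≤ x) (hp : p ≠ 0) :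
    x * x ^ (p - 1) = x ^ p := by
  rw [mul_comm, ← rpow_add_one' hx (by rwa [sub_add_cancel]), sub_add_cancel]

/- Bernoulli's inequality `(1 + s) ^ p ≷ 1 + p * s` at `s = u / (u + b) - 1`, multiplied by
`(u + b) ^ p`, becomes the comparison of `(u + b) ^ p - u ^ p` with `p * b * (u + b) ^ (p - 1)`. -/
lemma rpow_mul_one_add_mul_div_sub_one (hv : 0 < u + b) :
    (u + b) ^ p * (1 + p * (u / (u + b) - 1)) = (u + b) ^ p - p * (b * (u + b) ^ (p - 1)) := by
  rw [rpow_sub_one hv.ne']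
  field_simp
  ring

lemma rpow_add_sub_rpow_le_mul (hp : 1 ≤ p) (hu : 0 ≤ u) (hb : 0 ≤ b) :
    (u + b) ^ p - u ^ p ≤ p * (b * (u + b) ^ (p - 1)) := by
  rcases hb.eq_or_lt with rfl | hb
  · simp
  have hv : 0 < u + b := by linarith
  have h := one_add_mul_self_le_rpow_one_add (s := u / (u + b) - 1)
    (by linarith [div_nonneg hu hv.le]) hp
  rw [add_sub_cancel, div_rpow hu hv.le, le_div_iff₀ (by positivity), mul_comm,
    rpow_mul_one_add_mul_div_sub_one hv] at h
  linarith

lemma mul_le_rpow_add_sub_rpow (hp₀ : 0 ≤ p) (hp₁ : p ≤ 1) (hu : 0 ≤ u) (hb : 0 ≤ b) :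
    p * (b * (u + b) ^ (p - 1)) ≤ (u + b) ^ p - u ^ p := by
  rcases hb.eq_or_lt with rfl | hb
  · simp
  have hv : 0 < u + b := by linarith
  have h := rpow_one_add_le_one_add_mul_self (s := u / (u + b) - 1)
    (by linarith [div_nonneg hu hv.le]) hp₀ hp₁
  rw [add_sub_cancel, div_rpow hu hv.le, div_le_iff₀ (by positivity), mul_comm,
    rpow_mul_one_add_mul_div_sub_one hv] at h
  linarith

lemma mul_rpow_sub_one_le_rpow_add_sub_rpow (hp : 1 ≤ p) (hu : 0 ≤ u) (hb : 0 ≤ b) :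
    b * (u + b) ^ (p - 1) ≤ (u + b) ^ p - u ^ p := by
  have hp₀ : p ≠ 0 := by positivity
  have : u * u ^ (p - 1) ≤ u * (u + b) ^ (p - 1) := by
    gcongr
    linarith
  rw [← mul_rpow_sub_one_of_nonneg (by positivity) hp₀, ← mul_rpow_sub_one_of_nonneg hu hp₀]
  linarith

lemma rpow_add_sub_rpow_le_mul_rpow_sub_one (hp₀ : 0 < p) (hp₁ : p ≤ 1) (hu : 0 ≤ u)
    (hb : 0 ≤ b) : (u + b) ^ p - u ^ p ≤ b * (u + b) ^ (p - 1) := by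
  rw [← mul_rpow_sub_one_of_nonneg (by positivity) hp₀.ne']
  rcases hu.eq_or_lt with rfl | hu
  · simp [zero_rpow hp₀.ne']
  have : u * (u + b) ^ (p - 1) ≤ u * u ^ (p - 1) :=
    mul_le_mul_of_nonneg_left (rpow_le_rpow_of_nonpos hu (by linarith) (by linarith)) hu.le
  rw [← mul_rpow_sub_one_of_nonneg hu.le hp₀.ne']
  linarith

theorem rpow_add_sub_rpow_bounds (hp : 0 < p) (hu : 0 ≤ u) (hb : 0 ≤ b) :
    min 1 p * (b * (u + b) ^ (p - 1)) ≤ (u + b) ^ p - u ^ p ∧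
      (u + b) ^ p - u ^ p ≤ max 1 p * (b * (u + b) ^ (p - 1)) := by
  rcases le_total 1 p with hp₁ | hp₁
  · rw [min_eq_left hp₁, max_eq_right hp₁, one_mul]
    exact ⟨mul_rpow_sub_one_le_rpow_add_sub_rpow hp₁ hu hb, rpow_add_sub_rpow_le_mul hp₁ hu hb⟩
  · rw [min_eq_right hp₁, max_eq_left hp₁, one_mul]
    exact ⟨mul_le_rpow_add_sub_rpow hp.le hp₁ hu hb,
      rpow_add_sub_rpow_le_mul_rpow_sub_one hp hp₁ hu hb⟩

lemma mul_rpow_le_mul_rpow_of_nonpos {q c x y : ℝ} (hq : q ≤ 0) (hc : 0 ≤ c) (hcx : c ≤ x)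
    (hxy : x ≤ y) : c * y ^ q ≤ c * x ^ q := by
  rcases hc.eq_or_lt with rfl | hc
  · simp
  exact mul_le_mul_of_nonneg_left (rpow_le_rpow_of_nonpos (hc.trans_le hcx) hxy hq) hc.le

end Real

namespace Finset

variable {ι α : Type*} [LinearOrder α] {p : ℝ} {K : ι → α} {b : ι → ℝ}

theorem rpow_sum_bounds_of_injOn (hp : 0 < p) {G : Finset ι} (hK : Set.InjOn K G)
    (hb : ∀ i ∈ G, 0 ≤ b i) :
    min 1 p * ∑ i ∈ G, b i * (∑ j ∈ G with K j ≤ K i, b j) ^ (p - 1) ≤ (∑ i ∈ G, b i) ^ p ∧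
      (∑ i ∈ G, b i) ^ p ≤ max 1 p * ∑ i ∈ G, b i * (∑ j ∈ G with K j ≤ K i, b j) ^ (p - 1) := by
  classical
  induction G using Finset.induction_on_max_value K with
  | empty => simp [Real.zero_rpow hp.ne']
  | insert a G haG hmax ih =>
    have hK' : Set.InjOn K G := hK.mono (by simp)
    have hb' : ∀ i ∈ G, 0 ≤ b i := fun i hi => hb i (mem_insert_of_mem hi)
    have hfilter_of_mem : ∀ i ∈ G,
        (insert a G).filter (fun j => K j ≤ K i) = G.filter (fun j => K j ≤ K i) := by
      intro i hi
      rw [filter_insert, if_neg]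
      intro hai
      have : a = i := hK (mem_insert_self a G) (mem_insert_of_mem hi) (le_antisymm hai (hmax i hi))
      exact haG (this ▸ hi)
    have hfilter_a : (insert a G).filter (fun j => K j ≤ K a) = insert a G :=
      filter_true_of_mem fun j hj => (mem_insert.mp hj).elim (fun h => h ▸ le_rfl) (hmax j)
    obtain ⟨ih₁, ih₂⟩ := ih hK' hb'
    set T := ∑ i ∈ G, b i
    obtain ⟨h₁, h₂⟩ :=
      Real.rpow_add_sub_rpow_bounds hp (sum_nonneg hb') (hb a (mem_insert_self a G))
    have hsum : ∑ i ∈ insert a G, b i = T + b a := by rw [sum_insert haG, add_comm]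
    have hweighted :
        ∑ i ∈ insert a G, b i * (∑ j ∈ insert a G with K j ≤ K i, b j) ^ (p - 1) =
          b a * (T + b a) ^ (p - 1) + ∑ i ∈ G, b i * (∑ j ∈ G with K j ≤ K i, b j) ^ (p - 1) := by
      rw [sum_insert haG, hfilter_a, hsum]
      congr 1
      exact sum_congr rfl fun i hi => by rw [hfilter_of_mem i hi]
    rw [hweighted, hsum, mul_add, mul_add]
    constructor <;> linarith

theorem rpow_sum_bounds_of_rel (hp : 0 < p) {G : Finset ι} (hK : Set.InjOn K G)
    (hb : ∀ i ∈ G, 0 ≤ b i) {r : ι → ι → Prop} [DecidableRel r]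
    (hr : ∀ i ∈ G, ∀ j ∈ G, K j ≤ K i → r j i) :
    min 1 p * ∑ i ∈ G, b i * (∑ j ∈ G with r j i, b j) ^ (p - 1) ≤ (∑ i ∈ G, b i) ^ p ∧
      (∑ i ∈ G, b i) ^ p ≤ max 1 p * ∑ i ∈ G, b i * (∑ j ∈ G with r j i, b j) ^ (p - 1) := by
  obtain ⟨hlow, hup⟩ := rpow_sum_bounds_of_injOn hp hK hb
  set T := ∑ i ∈ G, b i
  have hself : ∀ i ∈ G, b i ≤ ∑ j ∈ G with K j ≤ K i, b j := fun i hi =>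
    single_le_sum (fun j hj => hb j (mem_filter.mp hj).1) (mem_filter.mpr ⟨hi, le_rfl⟩)
  have hchain : ∀ i ∈ G, ∑ j ∈ G with K j ≤ K i, b j ≤ ∑ j ∈ G with r j i, b j := by
    intro i hi
    refine sum_le_sum_of_subset_of_nonneg (fun j hj => ?_) (fun j hj _ => hb j (mem_filter.mp hj).1)
    obtain ⟨hjG, hji⟩ := mem_filter.mp hj
    exact mem_filter.mpr ⟨hjG, hr i hi j hjG hji⟩
  have htotal : ∀ i, ∑ j ∈ G with r j i, b j ≤ T := fun i =>
    sum_le_sum_of_subset_of_nonneg (filter_subset _ _) (fun j hj _ => hb j hj)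
  have hT : ∑ i ∈ G, b i * T ^ (p - 1) = T ^ p := by
    rw [← sum_mul, Real.mul_rpow_sub_one_of_nonneg (sum_nonneg hb) hp.ne']
  rcases le_total 1 p with hp₁ | hp₁
  · simp only [min_eq_left hp₁, max_eq_right hp₁, one_mul] at hlow hup ⊢
    have hq : 0 ≤ p - 1 := by linarith
    constructor
    · calc ∑ i ∈ G, b i * (∑ j ∈ G with r j i, b j) ^ (p - 1)
          ≤ ∑ i ∈ G, b i * T ^ (p - 1) := sum_le_sum fun i hi =>
            mul_le_mul_of_nonneg_left (Real.rpow_le_rpow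
              ((hb i hi).trans ((hself i hi).trans (hchain i hi))) (htotal i) hq) (hb i hi)
        _ = T ^ p := hT
    · calc T ^ p ≤ p * ∑ i ∈ G, b i * (∑ j ∈ G with K j ≤ K i, b j) ^ (p - 1) := hup
        _ ≤ p * ∑ i ∈ G, b i * (∑ j ∈ G with r j i, b j) ^ (p - 1) := by
            refine mul_le_mul_of_nonneg_left (sum_le_sum fun i hi => ?_) hp.le
            exact mul_le_mul_of_nonneg_left
              (Real.rpow_le_rpow ((hb i hi).trans (hself i hi)) (hchain i hi) hq) (hb i hi)
  · simp only [min_eq_right hp₁, max_eq_left hp₁, one_mul] at hlow hup ⊢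
    have hq : p - 1 ≤ 0 := by linarith
    constructor
    · calc p * ∑ i ∈ G, b i * (∑ j ∈ G with r j i, b j) ^ (p - 1)
          ≤ p * ∑ i ∈ G, b i * (∑ j ∈ G with K j ≤ K i, b j) ^ (p - 1) := by
            refine mul_le_mul_of_nonneg_left (sum_le_sum fun i hi => ?_) hp.le
            exact Real.mul_rpow_le_mul_rpow_of_nonpos hq (hb i hi) (hself i hi) (hchain i hi)
        _ ≤ T ^ p := hlow
    · calc T ^ p = ∑ i ∈ G, b i * T ^ (p - 1) := hT.symm
        _ ≤ ∑ i ∈ G, b i * (∑ j ∈ G with r j i, b j) ^ (p - 1) := sum_le_sum fun i hi =>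
            Real.mul_rpow_le_mul_rpow_of_nonpos hq (hb i hi) ((hself i hi).trans (hchain i hi))
              (htotal i)

end Finset

namespace DyadicCube

variable {d : ℕ} {Q R : DyadicCube d} {x : Fin d → ℝ}

lemma mem_toSet_iff : x ∈ Q.toSet ↔ ∀ i, ⌊x i / 2 ^ Q.k⌋ = Q.j i := by
  have h : (0 : ℝ) < 2 ^ Q.k := by positivity
  refine forall_congr' fun i => ?_
  rw [Int.floor_eq_iff, le_div_iff₀ h, div_lt_iff₀ h, mul_comm, mul_comm (_ + 1)]

lemma floor_div_two_zpow_of_le {k l : ℤ} (hkl : k ≤ l) (y : ℝ) :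
    ⌊y / 2 ^ l⌋ = ⌊y / 2 ^ k⌋ / 2 ^ (l - k).toNat := by
  have h : (2 : ℝ) ^ l = 2 ^ k * ((2 ^ (l - k).toNat : ℕ) : ℝ) := by
    rw [Nat.cast_pow, Nat.cast_ofNat, ← zpow_natCast, ← zpow_add₀ two_ne_zero]
    congr 1
    omega
  rw [h, ← div_div, Int.floor_div_natCast]
  push_cast
  rfl

lemma eq_of_mem_of_k_eq (hQ : x ∈ Q.toSet) (hR : x ∈ R.toSet) (hk : Q.k = R.k) : Q = R := by
  obtain ⟨k, j⟩ := Q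
  obtain ⟨l, j'⟩ := R
  rw [mem_toSet_iff] at hQ hR
  dsimp only at hk hQ hR
  subst hk
  congr
  funext i
  rw [← hQ i, hR i]

lemma toSet_subset_of_mem_of_k_le (hQ : x ∈ Q.toSet) (hR : x ∈ R.toSet) (hk : Q.k ≤ R.k) :
    Q.toSet ⊆ R.toSet := by
  intro y hy
  rw [mem_toSet_iff] at hQ hR hy ⊢
  intro i
  rw [floor_div_two_zpow_of_le hk, hy i, ← hQ i, ← floor_div_two_zpow_of_le hk, hR i]

end DyadicCube

/-- pointwise summation-by-parts comparison
`(∑_Q a_Q 1_Q)^p ≍_p ∑_Q a_Q 1_Q · (∑_{R ⊆ Q} a_R 1_R)^(p-1)`. -/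
theorem stmt0 (p : ℝ) (hp : 0 < p) :
    ∃ c C : ℝ, 0 < c ∧ 0 < C ∧
      ∀ (d : ℕ) (a : DyadicCube d → ℝ),
        (∀ Q, 0 ≤ a Q) → (Function.support a).Finite →
        ∀ x : Fin d → ℝ,
          c * ∑ᶠ Q : DyadicCube d,
              Q.toSet.indicator (fun _ => a Q) x *
                (∑ᶠ (R : DyadicCube d) (_ : R.toSet ⊆ Q.toSet),
                    R.toSet.indicator (fun _ => a R) x) ^ (p - 1)
            ≤ (∑ᶠ Q : DyadicCube d, Q.toSet.indicator (fun _ => a Q) x) ^ p ∧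
          (∑ᶠ Q : DyadicCube d, Q.toSet.indicator (fun _ => a Q) x) ^ p ≤
            C * ∑ᶠ Q : DyadicCube d,
              Q.toSet.indicator (fun _ => a Q) x *
                (∑ᶠ (R : DyadicCube d) (_ : R.toSet ⊆ Q.toSet),
                    R.toSet.indicator (fun _ => a R) x) ^ (p - 1) := by
  classical
  refine ⟨min 1 p, max 1 p, by positivity, by positivity, fun d a ha hfin x => ?_⟩
  have hfin_x :
      (Function.support fun Q : DyadicCube d => Q.toSet.indicator (fun _ => a Q) x).Finite :=
    hfin.subset fun Q hQ => (Set.indicator_apply_ne_zero.mp hQ).2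
  set F := hfin_x.toFinset
  have hF : ∀ Q ∈ F, x ∈ Q.toSet := fun Q hQ =>
    Set.mem_of_indicator_ne_zero (hfin_x.mem_toFinset.mp hQ)
  have hinner : ∀ Q : DyadicCube d,
      ∑ᶠ (R : DyadicCube d) (_ : R.toSet ⊆ Q.toSet), R.toSet.indicator (fun _ => a R) x =
        ∑ R ∈ F with R.toSet ⊆ Q.toSet, R.toSet.indicator (fun _ => a R) x := fun Q =>
    finsum_cond_eq_sum_of_cond_iff _ fun hR => by simp [F, hR]
  simp only [hinner]
  rw [finsum_eq_sum_of_support_subset _ hfin_x.coe_toFinset.ge,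
    finsum_eq_sum_of_support_subset (s := F) _ ?_]
  · exact Finset.rpow_sum_bounds_of_rel hp (K := DyadicCube.k)
      (fun Q hQ R hR => DyadicCube.eq_of_mem_of_k_eq (hF Q hQ) (hF R hR))
      (fun Q _ => Set.indicator_nonneg (fun _ _ => ha Q) x)
      (fun Q hQ R hR => DyadicCube.toSet_subset_of_mem_of_k_le (hF R hR) (hF Q hQ))
  · exact (Function.support_mul_subset_left _ _).trans hfin_x.coe_toFinset.ge
end

section
/- Key relation 1 for the equivalence of sum and sup testing: given a non-negative family {b_Q} indexed by dyadic cubes, define a_Q := ∑_{R ⊇ Q} b_R. Then pointwise ∑_Q ρ_Q b_Q 1_Q = ∑_Q λ_Q a_Q 1_Q and sup_Q a_Q 1_Q = ∑_Q b_Q 1_Q, where ρ_Q := ∑_{R ⊆ Q} λ_R 1_R. -/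
/-!
Both identities rearrange the double sum of `λ_P b_Q` over pairs `P ⊆ Q` of cubes containing `x`:
the first is Tonelli for nonnegative double sums and needs no structure of the cubes at all.
For the second, the dyadic cubes containing `x` form a chain (for `k ≤ K`, `⌊x / 2^K⌋` is
determined by `⌊x / 2^k⌋`), so `a_Q = ∑_{R ⊇ Q} b_R` increases as `Q` shrinks, and every finite
partial sum of `∑_{Q ∋ x} b_Q` is bounded by `a_{Q₀}` for its smallest cube `Q₀`.
-/

open MeasureTheory ENNReal Filter
open scoped NNReal ENNReal

open Set

section NestedSets

variable {ι α : Type*} (S : ι → Set α)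

noncomputable def sumSupersets (b : ι → ℝ≥0∞) (i : ι) : ℝ≥0∞ :=
  ∑' j : {j // S i ⊆ S j}, b j

noncomputable def sumSubsetIndicators (lam : ι → ℝ≥0∞) (i : ι) (y : α) : ℝ≥0∞ :=
  ∑' j : {j // S j ⊆ S i}, (S j).indicator (fun _ => lam j) y

lemma sumSupersets_eq_tsum_indicator (b : ι → ℝ≥0∞) (i : ι) :
    sumSupersets S b i = ∑' j, {j | S i ⊆ S j}.indicator b j :=
  tsum_subtype _ b

lemma indicator_sumSubsetIndicators_mul (lam b : ι → ℝ≥0∞) (x : α) (i : ι) :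
    (S i).indicator (fun y => sumSubsetIndicators S lam i y * b i) x
      = ∑' j, {j | S j ⊆ S i ∧ x ∈ S j}.indicator (fun j => lam j * b i) j := by
  by_cases hx : x ∈ S i
  · rw [indicator_of_mem hx, sumSubsetIndicators, ← ENNReal.tsum_mul_right]
    refine (tsum_subtype {j | S j ⊆ S i} fun j => (S j).indicator (fun _ => lam j) x * b i).trans
      (tsum_congr fun j => ?_)
    by_cases hji : S j ⊆ S i <;> by_cases hxj : x ∈ S j <;> simp [hji, hxj]
  · rw [indicator_of_notMem hx]
    exact (ENNReal.tsum_eq_zero.2 fun j => indicator_of_notMem (fun h => hx (h.1 h.2)) _).symm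

lemma indicator_mul_sumSupersets (lam b : ι → ℝ≥0∞) (x : α) (i : ι) :
    (S i).indicator (fun _ => lam i * sumSupersets S b i) x
      = ∑' j, {j | S i ⊆ S j ∧ x ∈ S i}.indicator (fun j => lam i * b j) j := by
  by_cases hx : x ∈ S i
  · rw [indicator_of_mem hx, sumSupersets_eq_tsum_indicator, ← ENNReal.tsum_mul_left]
    refine tsum_congr fun j => ?_
    by_cases hij : S i ⊆ S j <;> simp [hij, hx]
  · simp [hx]

theorem tsum_indicator_sumSubsetIndicators_mul (lam b : ι → ℝ≥0∞) (x : α) :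
    ∑' i, (S i).indicator (fun y => sumSubsetIndicators S lam i y * b i) x
      = ∑' i, (S i).indicator (fun _ => lam i * sumSupersets S b i) x := by
  simp only [indicator_sumSubsetIndicators_mul, indicator_mul_sumSupersets]
  exact ENNReal.tsum_comm

lemma Finset.exists_mem_forall_subset_of_chain {t : Finset ι} (ht : t.Nonempty)
    (hchain : ∀ i ∈ t, ∀ j ∈ t, S i ⊆ S j ∨ S j ⊆ S i) : ∃ i ∈ t, ∀ j ∈ t, S i ⊆ S j := by
  obtain ⟨i, hi, hmin⟩ := t.exists_minimalFor S ht
  exact ⟨i, hi, fun j hj => (hchain i hi j hj).elim id (hmin hj)⟩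

theorem iSup_indicator_sumSupersets (b : ι → ℝ≥0∞) {x : α}
    (hchain : ∀ i j, x ∈ S i → x ∈ S j → S i ⊆ S j ∨ S j ⊆ S i) :
    ⨆ i, (S i).indicator (fun _ => sumSupersets S b i) x
      = ∑' i, (S i).indicator (fun _ => b i) x := by
  classical
  refine le_antisymm (iSup_le fun i => ?_) ?_
  · by_cases hx : x ∈ S i
    · rw [indicator_of_mem hx, sumSupersets_eq_tsum_indicator]
      refine ENNReal.tsum_le_tsum fun j => ?_
      by_cases hij : S i ⊆ S j
      · rw [indicator_of_mem hij, indicator_of_mem (hij hx)]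
      · rw [indicator_of_notMem hij]
        exact zero_le
    · simp [hx]
  · rw [ENNReal.tsum_eq_iSup_sum]
    refine iSup_le fun s => ?_
    set t := s.filter (x ∈ S ·)
    have hsum : ∑ i ∈ s, (S i).indicator (fun _ => b i) x = ∑ i ∈ t, b i := by
      simp only [t, Finset.sum_filter, indicator_apply]
    rcases t.eq_empty_or_nonempty with ht | ht
    · simp [hsum, ht]
    obtain ⟨i, hi, hleast⟩ := Finset.exists_mem_forall_subset_of_chain S ht fun i hi j hj =>
      hchain i j (Finset.mem_filter.1 hi).2 (Finset.mem_filter.1 hj).2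
    have hxi : x ∈ S i := (Finset.mem_filter.1 hi).2
    calc ∑ i ∈ s, (S i).indicator (fun _ => b i) x
        = ∑ j ∈ t, {j | S i ⊆ S j}.indicator b j := by
          rw [hsum]
          exact Finset.sum_congr rfl fun j hj => (indicator_of_mem (hleast j hj) b).symm
      _ ≤ sumSupersets S b i := sumSupersets_eq_tsum_indicator S b i ▸ ENNReal.sum_le_tsum t
      _ = (S i).indicator (fun _ => sumSupersets S b i) x :=
          (indicator_of_mem hxi fun _ => sumSupersets S b i).symm
      _ ≤ ⨆ i, (S i).indicator (fun _ => sumSupersets S b i) x := le_iSup_of_le i le_rfl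

end NestedSets

lemma Int.floor_div_two_zpow_of_le {k K : ℤ} (hkK : k ≤ K) (r : ℝ) :
    ⌊r / 2 ^ K⌋ = ⌊r / 2 ^ k⌋ / 2 ^ (K - k).toNat := by
  have hpow : (2 : ℝ) ^ K = 2 ^ k * ((2 ^ (K - k).toNat : ℕ) : ℝ) := by
    rw [Nat.cast_pow, Nat.cast_ofNat, ← zpow_natCast, Int.toNat_of_nonneg (sub_nonneg.2 hkK),
      ← zpow_add₀ two_ne_zero, add_sub_cancel]
  rw [hpow, ← div_div, Int.floor_div_natCast, Nat.cast_pow, Nat.cast_ofNat]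

namespace DyadicCube

variable {d : ℕ}

lemma mem_toSet_iff_floor {Q : DyadicCube d} {x : Fin d → ℝ} :
    x ∈ Q.toSet ↔ ∀ i, ⌊x i / 2 ^ Q.k⌋ = Q.j i := by
  have h : (0 : ℝ) < 2 ^ Q.k := zpow_pos two_pos Q.k
  refine forall_congr' fun i => ?_
  rw [Int.floor_eq_iff, le_div_iff₀ h, div_lt_iff₀ h, mul_comm (Q.j i : ℝ),
    mul_comm ((Q.j i : ℝ) + 1)]

lemma toSet_subset_of_mem_of_k_le_s7 {Q R : DyadicCube d} {x : Fin d → ℝ}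
    (hxQ : x ∈ Q.toSet) (hxR : x ∈ R.toSet) (hk : Q.k ≤ R.k) : Q.toSet ⊆ R.toSet := by
  intro y hy
  rw [mem_toSet_iff_floor] at hxQ hxR hy ⊢
  intro i
  rw [Int.floor_div_two_zpow_of_le hk, hy i, ← hxQ i, ← Int.floor_div_two_zpow_of_le hk, hxR i]

lemma toSet_subset_or_subset_of_mem {Q R : DyadicCube d} {x : Fin d → ℝ}
    (hxQ : x ∈ Q.toSet) (hxR : x ∈ R.toSet) : Q.toSet ⊆ R.toSet ∨ R.toSet ⊆ Q.toSet :=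
  (le_total Q.k R.k).imp (toSet_subset_of_mem_of_k_le_s7 hxQ hxR)
    (toSet_subset_of_mem_of_k_le_s7 hxR hxQ)

end DyadicCube

theorem stmt7_general (d : ℕ) (lam b : DyadicCube d → ℝ≥0)
    (a : DyadicCube d → ℝ≥0∞)
    (ha : ∀ Q : DyadicCube d,
      a Q = ∑' R : {R : DyadicCube d // Q.toSet ⊆ R.toSet}, (b R.1 : ℝ≥0∞)) :
    ∀ x : Fin d → ℝ,
      (∑' Q : DyadicCube d,
          Set.indicator Q.toSet
            (fun y => (∑' R : {R : DyadicCube d // R.toSet ⊆ Q.toSet},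
                R.1.toSet.indicator (fun _ => (lam R.1 : ℝ≥0∞)) y) * b Q) x)
        = (∑' Q : DyadicCube d,
            Q.toSet.indicator (fun _ => (lam Q : ℝ≥0∞) * a Q) x) ∧
      (⨆ Q : DyadicCube d, Q.toSet.indicator (fun _ => a Q) x)
        = ∑' Q : DyadicCube d, Q.toSet.indicator (fun _ => (b Q : ℝ≥0∞)) x := by
  obtain rfl : a = sumSupersets DyadicCube.toSet fun R => (b R : ℝ≥0∞) := funext ha
  intro x
  exact ⟨tsum_indicator_sumSubsetIndicators_mul DyadicCube.toSet (fun R => (lam R : ℝ≥0∞))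
    (fun Q => (b Q : ℝ≥0∞)) x,
    iSup_indicator_sumSupersets _ _ fun _ _ => DyadicCube.toSet_subset_or_subset_of_mem⟩

/-- with `a_Q := ∑_{R ⊇ Q} b_R`, pointwise
`∑_Q ρ_Q b_Q 1_Q = ∑_Q λ_Q a_Q 1_Q` and `sup_Q a_Q 1_Q = ∑_Q b_Q 1_Q`. -/
theorem stmt7 (d : ℕ) (lam b : DyadicCube d → ℝ≥0)
    (hlam : (Function.support lam).Finite) (hb : (Function.support b).Finite)
    (a : DyadicCube d → ℝ≥0∞)
    (ha : ∀ Q : DyadicCube d,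
      a Q = ∑' R : {R : DyadicCube d // Q.toSet ⊆ R.toSet}, (b R.1 : ℝ≥0∞)) :
    ∀ x : Fin d → ℝ,
      (∑' Q : DyadicCube d,
          Set.indicator Q.toSet
            (fun y => (∑' R : {R : DyadicCube d // R.toSet ⊆ Q.toSet},
                R.1.toSet.indicator (fun _ => (lam R.1 : ℝ≥0∞)) y) * b Q) x)
        = (∑' Q : DyadicCube d,
            Q.toSet.indicator (fun _ => (lam Q : ℝ≥0∞) * a Q) x) ∧
      (⨆ Q : DyadicCube d, Q.toSet.indicator (fun _ => a Q) x)
        = ∑' Q : DyadicCube d, Q.toSet.indicator (fun _ => (b Q : ℝ≥0∞)) x :=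
  stmt7_general d lam b a ha
end

section
/- Sufficiency of the dual integral condition: let 0 < q < 1 ≤ p < ∞, let σ, ω be locally finite Borel measures on ℝ^d, and let {λ_Q} be a non-negative family indexed by dyadic cubes with λ_Q = 0 whenever σ(Q) = 0 or ω(Q) = 0. If ∫ ( ∑_Q λ_Q^q (ω(Q)/σ(Q)) 1_Q )^{p/(p−q)} dσ < ∞, then there is a constant C such that ‖∑_Q λ_Q a_Q 1_Q‖_{L^q(ω)} ≤ C ‖sup_Q a_Q 1_Q‖_{L^p(σ)} for all non-negative families {a_Q}. -/
open MeasureTheory ENNReal Filter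
open scoped NNReal ENNReal

/-!
By subadditivity of `t ↦ t ^ q` for `q ≤ 1`,
`∫ (∑_Q λ_Q a_Q 1_Q)^q dω ≤ ∑_Q λ_Q^q a_Q^q ω(Q) = ∫ ∑_Q λ_Q^q (ω(Q)/σ(Q)) a_Q^q 1_Q dσ`,
and the last integrand is at most `Φ · (sup_Q a_Q 1_Q)^q`, where
`Φ = ∑_Q λ_Q^q (ω(Q)/σ(Q)) 1_Q`. Hölder's inequality with the exponents `p/(p-q)` and `p/q`
then bounds the integral by `‖Φ‖_{L^{p/(p-q)}(σ)} ‖sup_Q a_Q 1_Q‖_{L^p(σ)}^q`.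
-/

namespace ENNReal

theorem rpow_sum_le_sum_rpow {ι : Type*} (s : Finset ι) (f : ι → ℝ≥0∞) {q : ℝ}
    (hq0 : 0 < q) (hq1 : q ≤ 1) : (∑ i ∈ s, f i) ^ q ≤ ∑ i ∈ s, f i ^ q := by
  classical
  induction s using Finset.induction_on with
  | empty => simp [zero_rpow_of_pos hq0]
  | insert i s hi ih =>
    rw [Finset.sum_insert hi, Finset.sum_insert hi]
    exact (rpow_add_le_add_rpow _ _ hq0.le hq1).trans (add_le_add_right ih _)

theorem rpow_tsum_le_tsum_rpow {ι : Type*} (f : ι → ℝ≥0∞) {q : ℝ}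
    (hq0 : 0 < q) (hq1 : q ≤ 1) : (∑' i, f i) ^ q ≤ ∑' i, f i ^ q := by
  refine le_of_tendsto
    ((continuous_rpow_const.tendsto _).comp ENNReal.summable.hasSum) ?_
  filter_upwards with s
  exact (rpow_sum_le_sum_rpow s f hq0 hq1).trans (ENNReal.sum_le_tsum s)

end ENNReal

theorem lintegral_mul_rpow_le {α : Type*} [MeasurableSpace α] (μ : Measure α)
    {f g : α → ℝ≥0∞} (hf : AEMeasurable f μ) (hg : AEMeasurable g μ) {p q : ℝ}
    (hq0 : 0 < q) (hqp : q < p) :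
    ∫⁻ x, f x * g x ^ q ∂μ
      ≤ (∫⁻ x, f x ^ (p / (p - q)) ∂μ) ^ ((p - q) / p)
        * (∫⁻ x, g x ^ p ∂μ) ^ (q / p) := by
  have hp0 : 0 < p := hq0.trans hqp
  have hconj : (p / (p - q)).HolderConjugate (p / q) := by
    rw [Real.holderConjugate_iff]
    refine ⟨by rw [lt_div_iff₀ (by linarith)]; linarith, ?_⟩
    field_simp
    ring
  have hgp : ∀ x, (g x ^ q) ^ (p / q) = g x ^ p := fun x => by
    rw [← rpow_mul, mul_div_cancel₀ _ hq0.ne']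
  have holder := lintegral_mul_le_Lp_mul_Lq μ hconj hf (hg.pow_const q)
  simpa only [Pi.mul_apply, one_div_div, hgp] using holder

section IndicatorSums

variable {α ι : Type*} {s : ι → Set α}

theorem tsum_indicator_mul_rpow_le {q : ℝ} (hq : 0 ≤ q) (b a : ι → ℝ≥0∞) (x : α) :
    ∑' i, (s i).indicator (fun _ => b i * a i ^ q) x
      ≤ (∑' i, (s i).indicator (fun _ => b i) x)
        * (⨆ i, (s i).indicator (fun _ => a i) x) ^ q := by
  rw [← ENNReal.tsum_mul_right]
  refine ENNReal.tsum_le_tsum fun i => ?_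
  by_cases hx : x ∈ s i
  · simp only [Set.indicator_of_mem hx]
    gcongr
    exact le_iSup_of_le i (Set.indicator_of_mem hx (fun _ => a i)).ge
  · simp [hx]

variable [MeasurableSpace α]

theorem lintegral_rpow_tsum_indicator_le [Countable ι] (ω : Measure α)
    (hs : ∀ i, MeasurableSet (s i)) (c : ι → ℝ≥0∞) {q : ℝ} (hq0 : 0 < q) (hq1 : q ≤ 1) :
    ∫⁻ x, (∑' i, (s i).indicator (fun _ => c i) x) ^ q ∂ω
      ≤ ∑' i, c i ^ q * ω (s i) := by
  have hpow : ∀ i x,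
      (s i).indicator (fun _ => c i) x ^ q = (s i).indicator (fun _ => c i ^ q) x :=
    fun i x => by by_cases hx : x ∈ s i <;> simp [hx, zero_rpow_of_pos hq0]
  calc ∫⁻ x, (∑' i, (s i).indicator (fun _ => c i) x) ^ q ∂ω
      ≤ ∫⁻ x, ∑' i, (s i).indicator (fun _ => c i ^ q) x ∂ω :=
        lintegral_mono fun x => (rpow_tsum_le_tsum_rpow _ hq0 hq1).trans_eq
          (tsum_congr fun i => hpow i x)
    _ = ∑' i, c i ^ q * ω (s i) := by
        rw [lintegral_tsum fun i => (measurable_const.indicator (hs i)).aemeasurable]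
        exact tsum_congr fun i => lintegral_indicator_const (hs i) _

theorem mul_measure_eq_lintegral_indicator_div {t : Set α} (ht : MeasurableSet t)
    (σ ω : Measure α) (hσ : σ t ≠ ∞) (c : ℝ≥0∞) (hc : σ t = 0 → c = 0) :
    c * ω t = ∫⁻ x, t.indicator (fun _ => c * (ω t / σ t)) x ∂σ := by
  rw [lintegral_indicator_const ht]
  by_cases hσ0 : σ t = 0
  · simp [hc hσ0]
  · rw [mul_assoc, ENNReal.div_mul_cancel hσ0 hσ]

theorem lintegral_rpow_tsum_indicator_mul_le [Countable ι]
    {σ ω : Measure α} (hs : ∀ i, MeasurableSet (s i)) (hσ : ∀ i, σ (s i) ≠ ∞)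
    (lam a : ι → ℝ≥0∞) (hlam : ∀ i, σ (s i) = 0 → lam i = 0)
    {p q : ℝ} (hq0 : 0 < q) (hq1 : q ≤ 1) (hqp : q < p) :
    ∫⁻ x, (∑' i, (s i).indicator (fun _ => lam i * a i) x) ^ q ∂ω
      ≤ (∫⁻ x, (∑' i, (s i).indicator (fun _ => lam i ^ q * (ω (s i) / σ (s i))) x)
            ^ (p / (p - q)) ∂σ) ^ ((p - q) / p)
        * (∫⁻ x, (⨆ i, (s i).indicator (fun _ => a i) x) ^ p ∂σ) ^ (q / p) := by
  have hind : ∀ i (c : ℝ≥0∞), Measurable ((s i).indicator fun _ => c) :=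
    fun i _ => measurable_const.indicator (hs i)
  have hmass : ∀ i, (lam i * a i) ^ q * ω (s i)
      = ∫⁻ x, (s i).indicator
          (fun _ => lam i ^ q * (ω (s i) / σ (s i)) * a i ^ q) x ∂σ := by
    intro i
    rw [mul_rpow_of_nonneg _ _ hq0.le, mul_right_comm (lam i ^ q) _ (a i ^ q)]
    refine mul_measure_eq_lintegral_indicator_div (hs i) σ ω (hσ i) _ fun h => ?_
    simp [hlam i h, zero_rpow_of_pos hq0]
  calc ∫⁻ x, (∑' i, (s i).indicator (fun _ => lam i * a i) x) ^ q ∂ω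
      ≤ ∑' i, (lam i * a i) ^ q * ω (s i) := lintegral_rpow_tsum_indicator_le ω hs _ hq0 hq1
    _ = ∫⁻ x, ∑' i, (s i).indicator
          (fun _ => lam i ^ q * (ω (s i) / σ (s i)) * a i ^ q) x ∂σ := by
        rw [lintegral_tsum fun i => (hind i _).aemeasurable]
        exact tsum_congr hmass
    _ ≤ ∫⁻ x, (∑' i, (s i).indicator (fun _ => lam i ^ q * (ω (s i) / σ (s i))) x)
          * (⨆ i, (s i).indicator (fun _ => a i) x) ^ q ∂σ :=
        lintegral_mono fun x => tsum_indicator_mul_rpow_le hq0.le _ _ x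
    _ ≤ _ := lintegral_mul_rpow_le σ (Measurable.tsum fun i => hind i _).aemeasurable
          (Measurable.iSup fun i => hind i _).aemeasurable hq0 hqp

end IndicatorSums

namespace DyadicCube

variable {d : ℕ}

instance : Countable (DyadicCube d) :=
  Function.Injective.countable (f := fun Q : DyadicCube d => (Q.k, Q.j))
    fun Q R h => by cases Q; cases R; simp_all

theorem toSet_eq_pi (Q : DyadicCube d) :
    Q.toSet =
      Set.univ.pi fun i => Set.Ico ((2:ℝ) ^ Q.k * Q.j i) ((2:ℝ) ^ Q.k * (Q.j i + 1)) := by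
  ext x
  simp [toSet]

theorem measurableSet_toSet (Q : DyadicCube d) : MeasurableSet Q.toSet := by
  rw [toSet_eq_pi]
  exact MeasurableSet.univ_pi fun _ => measurableSet_Ico

theorem measure_toSet_ne_top (μ : Measure (Fin d → ℝ)) [IsLocallyFiniteMeasure μ]
    (Q : DyadicCube d) : μ Q.toSet ≠ ∞ := by
  have hsub : Q.toSet ⊆
      Set.Icc (fun i => (2:ℝ) ^ Q.k * Q.j i) (fun i => (2:ℝ) ^ Q.k * (Q.j i + 1)) := by
    rw [toSet_eq_pi, ← Set.pi_univ_Icc]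
    exact Set.pi_mono fun _ _ => Set.Ico_subset_Icc_self
  exact ((measure_mono hsub).trans_lt isCompact_Icc.measure_lt_top).ne

end DyadicCube

theorem stmt9_general (d : ℕ) (p q : ℝ) (hq0 : 0 < q) (hq1 : q < 1) (hp1 : 1 ≤ p)
    (σ ω : Measure (Fin d → ℝ))
    [IsLocallyFiniteMeasure σ]
    (lam : DyadicCube d → ℝ≥0)
    (hlam : ∀ Q : DyadicCube d, σ Q.toSet = 0 ∨ ω Q.toSet = 0 → lam Q = 0)
    (hfin : (∫⁻ x, (∑' Q : DyadicCube d,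
        Q.toSet.indicator
          (fun _ => (lam Q : ℝ≥0∞) ^ q * (ω Q.toSet / σ Q.toSet)) x) ^ (p/(p-q)) ∂σ) < ∞) :
    ∃ C : ℝ≥0∞, C < ∞ ∧ ∀ a : DyadicCube d → ℝ≥0,
      (∫⁻ x, (∑' Q : DyadicCube d,
          Q.toSet.indicator (fun _ => (lam Q : ℝ≥0∞) * a Q) x) ^ q ∂ω) ^ (1/q)
        ≤ C * (∫⁻ x, (⨆ Q : DyadicCube d,
            Q.toSet.indicator (fun _ => (a Q : ℝ≥0∞)) x) ^ p ∂σ) ^ (1/p) := by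
  have hqp : q < p := hq1.trans_le hp1
  have hpq : 0 ≤ (p - q) / p := div_nonneg (sub_nonneg.2 hqp.le) (hq0.trans hqp).le
  refine ⟨(_ ^ ((p - q) / p)) ^ (1 / q),
    rpow_lt_top_of_nonneg (by positivity) (rpow_lt_top_of_nonneg hpq hfin.ne).ne, fun a => ?_⟩
  have key := lintegral_rpow_tsum_indicator_mul_le DyadicCube.measurableSet_toSet
    (DyadicCube.measure_toSet_ne_top σ) (ω := ω) (fun Q => (lam Q : ℝ≥0∞)) (fun Q => a Q)
    (fun Q h => by simp [hlam Q (Or.inl h)]) hq0 hq1.le hqp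
  calc _ ≤ (_ * _) ^ (1 / q) := rpow_le_rpow key (by positivity)
    _ = _ := by
      rw [mul_rpow_of_nonneg _ _ (by positivity), ← rpow_mul _ (q / p)]
      congr 2
      field_simp

/-- sufficiency of the dual integral condition
`∫ (∑_Q λ_Q^q (ω(Q)/σ(Q)) 1_Q)^(p/(p−q)) dσ < ∞` for the sup-testing inequality. -/
theorem stmt9 (d : ℕ) (p q : ℝ) (hq0 : 0 < q) (hq1 : q < 1) (hp1 : 1 ≤ p)
    (σ ω : Measure (Fin d → ℝ))
    [IsLocallyFiniteMeasure σ] [IsLocallyFiniteMeasure ω]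
    (lam : DyadicCube d → ℝ≥0)
    (hlam : ∀ Q : DyadicCube d, σ Q.toSet = 0 ∨ ω Q.toSet = 0 → lam Q = 0)
    (hfin : (∫⁻ x, (∑' Q : DyadicCube d,
        Q.toSet.indicator
          (fun _ => (lam Q : ℝ≥0∞) ^ q * (ω Q.toSet / σ Q.toSet)) x) ^ (p/(p-q)) ∂σ) < ∞) :
    ∃ C : ℝ≥0∞, C < ∞ ∧ ∀ a : DyadicCube d → ℝ≥0,
      (∫⁻ x, (∑' Q : DyadicCube d,
          Q.toSet.indicator (fun _ => (lam Q : ℝ≥0∞) * a Q) x) ^ q ∂ω) ^ (1/q)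
        ≤ C * (∫⁻ x, (⨆ Q : DyadicCube d,
            Q.toSet.indicator (fun _ => (a Q : ℝ≥0∞)) x) ^ p ∂σ) ^ (1/p) :=
  stmt9_general d p q hq0 hq1 hp1 σ ω lam hlam hfin
end

section
/- Hölder direction of Maurey factorization: let (X,μ) be a measure space and q ∈ (0,1). Suppose Φ ≥ 0 is measurable with ∫ Φ dμ ≤ 1, and g ≥ 0 is measurable with g = 0 μ-a.e. on {Φ = 0} and ∫ g Φ^{−(1−q)/q} dμ ≤ C. Then (∫ g^q dμ)^{1/q} ≤ C. -/
/-!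
Since `g` vanishes where `Φ` does, `g ^ q = (g * Φ ^ (-(1 - q) / q)) ^ q * Φ ^ (1 - q)` almost
everywhere, and Hölder's inequality with exponents `1 / q` and `1 / (1 - q)` bounds `∫ g ^ q` by
`(∫ g * Φ ^ (-(1 - q) / q)) ^ q * (∫ Φ) ^ (1 - q) ≤ C ^ q`.
-/

open MeasureTheory ENNReal

namespace ENNReal

theorem rpow_eq_mul_rpow_neg_rpow_mul_rpow_one_sub {a b : ℝ≥0∞} {q : ℝ} (hq : 0 < q)
    (hb : b ≠ ∞) (hab : b = 0 → a = 0) :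
    a ^ q = (a * b ^ (-(1 - q) / q)) ^ q * b ^ (1 - q) := by
  rcases eq_or_ne b 0 with hb0 | hb0
  · simp [hab hb0, hb0, zero_rpow_of_pos hq]
  · have hexp : -(1 - q) / q * q + (1 - q) = 0 := by field_simp; ring
    rw [mul_rpow_of_nonneg _ _ hq.le, mul_assoc, ← rpow_mul, ← rpow_add _ _ hb0 hb, hexp,
      rpow_zero, mul_one]

end ENNReal

namespace MeasureTheory

theorem lintegral_rpow_le_lintegral_mul_rpow_neg_mul_lintegral_rpow {X : Type*}
    [MeasurableSpace X] {μ : Measure X} {q : ℝ} (hq0 : 0 < q) (hq1 : q ≤ 1) {Φ g : X → ℝ≥0∞}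
    (hΦm : AEMeasurable Φ μ) (hgm : AEMeasurable g μ) (hΦ : ∫⁻ x, Φ x ∂μ ≠ ∞)
    (hsupp : ∀ᵐ x ∂μ, Φ x = 0 → g x = 0) :
    ∫⁻ x, g x ^ q ∂μ ≤
      (∫⁻ x, g x * Φ x ^ (-(1 - q) / q) ∂μ) ^ q * (∫⁻ x, Φ x ∂μ) ^ (1 - q) := by
  have hfactor : ∀ᵐ x ∂μ, g x ^ q = (g x * Φ x ^ (-(1 - q) / q)) ^ q * Φ x ^ (1 - q) := by
    filter_upwards [hsupp, ae_lt_top' hΦm hΦ] with x hx hΦx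
    exact rpow_eq_mul_rpow_neg_rpow_mul_rpow_one_sub hq0 hΦx.ne hx
  rw [lintegral_congr_ae hfactor]
  exact lintegral_mul_norm_pow_le (hgm.mul (hΦm.pow_const _)) hΦm hq0.le (by linarith)
    (by ring)

end MeasureTheory

/-- Hölder direction of Maurey's factorization. -/
theorem stmt12 {X : Type*} [MeasurableSpace X] (μ : Measure X)
    (q : ℝ) (hq0 : 0 < q) (hq1 : q < 1)
    (Φ g : X → ℝ≥0∞) (hΦm : Measurable Φ) (hgm : Measurable g)
    (hΦ : (∫⁻ x, Φ x ∂μ) ≤ 1)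
    (hsupp : ∀ᵐ x ∂μ, Φ x = 0 → g x = 0)
    (C : ℝ≥0∞) (hC : (∫⁻ x, g x * Φ x ^ (-(1-q)/q) ∂μ) ≤ C) :
    (∫⁻ x, g x ^ q ∂μ) ^ (1/q) ≤ C := by
  have hgq : ∫⁻ x, g x ^ q ∂μ ≤ C ^ q :=
    calc ∫⁻ x, g x ^ q ∂μ
        ≤ (∫⁻ x, g x * Φ x ^ (-(1 - q) / q) ∂μ) ^ q * (∫⁻ x, Φ x ∂μ) ^ (1 - q) :=
          lintegral_rpow_le_lintegral_mul_rpow_neg_mul_lintegral_rpow hq0 hq1.le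
            hΦm.aemeasurable hgm.aemeasurable (hΦ.trans_lt one_lt_top).ne hsupp
      _ ≤ C ^ q * 1 ^ (1 - q) := by gcongr
      _ = C ^ q := by rw [one_rpow, mul_one]
  calc (∫⁻ x, g x ^ q ∂μ) ^ (1 / q) ≤ (C ^ q) ^ (1 / q) := by gcongr
    _ = C := by rw [one_div, rpow_rpow_inv hq0.ne']
end

section
/- Counterexample to necessity of the Wolff condition for γ = q: for every 0 < q < 1 < p < ∞ there exist sequences λ_j ≥ 0 and ω_j > 0 (j ≥ 0) such that, with W_j := ∑_{k=0}^j ω_k, one has ∑_{j=0}^∞ λ_j^q W_j < ∞ but ∑_{j=0}^∞ (ω_j / W_j)(λ_j^q W_j)^{(p−1)/(p−q)} = ∞. Concretely, for any β > 1 with β(p−1)/(p−q) < 1, the choice ω_j := 2^{j+1} and λ_j^q W_j := (j+1)^{−β} works. -/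
/-!
With `ω_j = 2^(j+1)` the partial sums `W_j = 2^(j+2) - 2` are comparable to `ω_j` itself, so
`ω_j / W_j ≥ 1/2`. Choosing `λ_j` with `λ_j^q W_j = (j+1)^(-β)` for some `1 < β < 1/α`, where
`α = (p-1)/(p-q) ∈ (0,1)`, the first series is a convergent `p`-series, while the second one
dominates half of the divergent `p`-series `∑ (j+1)^(-βα)`.
-/

open Finset
open scoped ENNReal

lemma Real.summable_nat_add_one_rpow_neg_iff {s : ℝ} :
    Summable (fun n : ℕ => ((n : ℝ) + 1) ^ (-s)) ↔ 1 < s := by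
  rw [← Real.summable_one_div_nat_add_rpow 1 s]
  refine summable_congr fun n => ?_
  rw [Real.rpow_neg (by positivity), abs_of_pos (by positivity), one_div]

lemma ENNReal.tsum_ofReal_eq_top_of_not_summable {ι : Type*} {f : ι → ℝ} (hf : ∀ i, 0 ≤ f i)
    (h : ¬Summable f) : ∑' i, ENNReal.ofReal (f i) = ∞ := by
  contrapose! h
  simpa [ENNReal.toReal_ofReal (hf _)] using ENNReal.summable_toReal h

lemma Real.rpow_inv_div_rpow_mul_cancel {a W q : ℝ} (ha : 0 ≤ a) (hW : 0 < W) (hq : q ≠ 0) :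
    ((a / W) ^ q⁻¹) ^ q * W = a := by
  rw [Real.rpow_inv_rpow (div_nonneg ha hW.le) hq, div_mul_cancel₀ a hW.ne']

lemma sum_range_two_pow_succ (j : ℕ) :
    ∑ k ∈ range (j + 1), (2 : ℝ) ^ (k + 1) = 2 ^ (j + 2) - 2 := by
  induction j with
  | zero => norm_num
  | succ n ih => rw [sum_range_succ, ih]; ring

lemma sum_range_two_pow_succ_pos (j : ℕ) : 0 < ∑ k ∈ range (j + 1), (2 : ℝ) ^ (k + 1) :=
  sum_pos (fun _ _ => by positivity) nonempty_range_add_one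

lemma half_le_two_pow_succ_div_sum_range (j : ℕ) :
    1 / 2 ≤ (2 : ℝ) ^ (j + 1) / ∑ k ∈ range (j + 1), (2 : ℝ) ^ (k + 1) := by
  rw [le_div_iff₀ (sum_range_two_pow_succ_pos j), sum_range_two_pow_succ, pow_succ _ (j + 1)]
  linarith

namespace WolffCounterexample

variable {q β : ℝ}

noncomputable def lam (q β : ℝ) (j : ℕ) : ℝ :=
  (((j : ℝ) + 1) ^ (-β) / ∑ k ∈ range (j + 1), (2 : ℝ) ^ (k + 1)) ^ q⁻¹

lemma lam_nonneg (j : ℕ) : 0 ≤ lam q β j := by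
  unfold lam
  have := sum_range_two_pow_succ_pos j
  positivity

lemma lam_rpow_mul_sum_range (hq : q ≠ 0) (j : ℕ) :
    lam q β j ^ q * ∑ k ∈ range (j + 1), (2 : ℝ) ^ (k + 1) = ((j : ℝ) + 1) ^ (-β) :=
  Real.rpow_inv_div_rpow_mul_cancel (by positivity) (sum_range_two_pow_succ_pos j) hq

lemma tsum_lam_rpow_mul_sum_range_lt_top (hq : q ≠ 0) (hβ : 1 < β) :
    ∑' j : ℕ, ENNReal.ofReal (lam q β j ^ q * ∑ k ∈ range (j + 1), (2 : ℝ) ^ (k + 1)) < ∞ := by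
  simp_rw [lam_rpow_mul_sum_range hq]
  exact (Real.summable_nat_add_one_rpow_neg_iff.2 hβ).tsum_ofReal_lt_top

lemma tsum_wolff_eq_top (hq : q ≠ 0) {α : ℝ} (hβα : β * α < 1) :
    ∑' j : ℕ, ENNReal.ofReal
        (((2 : ℝ) ^ (j + 1) / ∑ k ∈ range (j + 1), (2 : ℝ) ^ (k + 1)) *
          (lam q β j ^ q * ∑ k ∈ range (j + 1), (2 : ℝ) ^ (k + 1)) ^ α) = ∞ := by
  have hlower (j : ℕ) : 1 / 2 * ((j : ℝ) + 1) ^ (-(β * α)) ≤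
      ((2 : ℝ) ^ (j + 1) / ∑ k ∈ range (j + 1), (2 : ℝ) ^ (k + 1)) *
        (lam q β j ^ q * ∑ k ∈ range (j + 1), (2 : ℝ) ^ (k + 1)) ^ α := by
    rw [lam_rpow_mul_sum_range hq, ← Real.rpow_mul (by positivity), neg_mul]
    exact mul_le_mul_of_nonneg_right (half_le_two_pow_succ_div_sum_range j) (by positivity)
  have hdiv : ¬Summable fun j : ℕ => 1 / 2 * ((j : ℝ) + 1) ^ (-(β * α)) := by
    rw [summable_mul_left_iff (by norm_num), Real.summable_nat_add_one_rpow_neg_iff]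
    exact hβα.not_gt
  refine top_le_iff.1 ?_
  calc ∞ = ∑' j : ℕ, ENNReal.ofReal (1 / 2 * ((j : ℝ) + 1) ^ (-(β * α))) :=
        (ENNReal.tsum_ofReal_eq_top_of_not_summable (fun _ => by positivity) hdiv).symm
    _ ≤ _ := ENNReal.tsum_le_tsum fun j => ENNReal.ofReal_le_ofReal (hlower j)

end WolffCounterexample

/-- counterexample to necessity of the Wolff condition for `γ = q`:
for `0 < q < 1 < p` there are sequences `λ_j ≥ 0`, `ω_j > 0` such that, with
`W_j := ∑_{k≤j} ω_k`, `∑_j λ_j^q W_j < ∞` but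
`∑_j (ω_j/W_j)(λ_j^q W_j)^{(p−1)/(p−q)} = ∞`. -/
theorem stmt18 (p q : ℝ) (hq0 : 0 < q) (hq1 : q < 1) (hp : 1 < p) :
    ∃ lam w : ℕ → ℝ, (∀ j, 0 ≤ lam j) ∧ (∀ j, 0 < w j) ∧
      (∑' j : ℕ, ENNReal.ofReal
          (lam j ^ q * ∑ k ∈ Finset.range (j + 1), w k)) < ∞ ∧
      (∑' j : ℕ, ENNReal.ofReal
          ((w j / ∑ k ∈ Finset.range (j + 1), w k) *
            (lam j ^ q * ∑ k ∈ Finset.range (j + 1), w k) ^ ((p - 1) / (p - q)))) = ∞ := by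
  set α := (p - 1) / (p - q)
  have hpq : 0 < p - q := by linarith
  have hα0 : 0 < α := div_pos (by linarith) hpq
  have hα1 : α < 1 := (div_lt_one hpq).2 (by linarith)
  obtain ⟨β, hβ1, hβα⟩ := exists_between (one_lt_one_div hα0 hα1)
  refine ⟨WolffCounterexample.lam q β, fun k => 2 ^ (k + 1), WolffCounterexample.lam_nonneg,
    fun j => by positivity, WolffCounterexample.tsum_lam_rpow_mul_sum_range_lt_top hq0.ne' hβ1,
    WolffCounterexample.tsum_wolff_eq_top hq0.ne' ((lt_div_iff₀ hα0).1 hβα)⟩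
end
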